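/- arXiv:1309.5807 — 3 statements merged into one kernel-verified Lean document; each statement's English description precedes it below -/
import Mathlib

section
/- For the Lorenz system with b = 2a, if (x,y,z) : ℝ → ℝ is a solution, then the function t ↦ z(t) - x(t)²/b satisfies the linear ODE u' = -b u, hence z(t) - x(t)²/b = (z(0) - x(0)²/b)·exp(-b t) for all t. -/
/-! Since b = 2a, the derivative of x²/b is x(-x + y), whose x y term cancels the x y term of z';
what is left is u' = -b u for u = z - x²/b, and then exp(b t) u(t) has zero derivative. -/

open Real

theorem eq_exp_smul_of_hasDerivAt_smul_self {E : Type*} [NormedAddCommGroup E] [NormedSpace ℝ E]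
    {u : ℝ → E} {c : ℝ} (hu : ∀ t, HasDerivAt u (c • u t) t) (t : ℝ) :
    u t = exp (c * t) • u 0 := by
  have hderiv : ∀ s, HasDerivAt (fun s => exp (-c * s) • u s) 0 s := by
    intro s
    have hexp : HasDerivAt (fun s => exp (-c * s)) (exp (-c * s) * -c) s := by
      simpa using ((hasDerivAt_id s).const_mul (-c)).exp
    refine (hexp.smul (hu s)).congr_deriv ?_
    rw [smul_smul, mul_neg, neg_smul, ← smul_smul, add_neg_cancel]
  have hconst : exp (-c * t) • u t = exp (-c * 0) • u 0 :=
    is_const_of_deriv_eq_zero (fun s => (hderiv s).differentiableAt)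
      (fun s => (hderiv s).deriv) t 0
  rw [mul_zero, exp_zero, one_smul] at hconst
  rw [← hconst, smul_smul, ← exp_add]
  simp

theorem lorenz_hasDerivAt_z_sub_sq_div {a t : ℝ} {x y z : ℝ → ℝ} (ha : a ≠ 0)
    (hx : HasDerivAt x (-a * x t + a * y t) t)
    (hz : HasDerivAt z (-(2 * a) * z t + x t * y t) t) :
    HasDerivAt (fun s => z s - x s ^ 2 / (2 * a)) (-(2 * a) * (z t - x t ^ 2 / (2 * a))) t := by
  refine (hz.sub ((hx.pow 2).div_const (2 * a))).congr_deriv ?_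
  field_simp
  ring

theorem lorenz_invariant_ode_general (a b : ℝ) (ha : 0 < a) (hb : b = 2 * a)
    (x y z : ℝ → ℝ)
    (hx : ∀ t, HasDerivAt x (-a * x t + a * y t) t)
    (hz : ∀ t, HasDerivAt z (-b * z t + x t * y t) t) :
    (∀ t, HasDerivAt (fun s => z s - x s ^ 2 / b)
        (-b * (z t - x t ^ 2 / b)) t) ∧
    (∀ t, z t - x t ^ 2 / b = (z 0 - x 0 ^ 2 / b) * Real.exp (-b * t)) := by
  subst hb
  have hu : ∀ t, HasDerivAt (fun s => z s - x s ^ 2 / (2 * a))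
      (-(2 * a) * (z t - x t ^ 2 / (2 * a))) t :=
    fun t => lorenz_hasDerivAt_z_sub_sq_div ha.ne' (hx t) (hz t)
  refine ⟨hu, fun t => ?_⟩
  rw [eq_exp_smul_of_hasDerivAt_smul_self hu t, smul_eq_mul, mul_comm]

theorem lorenz_invariant_ode (a b r : ℝ) (ha : 0 < a) (hb : b = 2 * a)
    (x y z : ℝ → ℝ)
    (hx : ∀ t, HasDerivAt x (-a * x t + a * y t) t)
    (hy : ∀ t, HasDerivAt y (r * x t - y t - x t * z t) t)
    (hz : ∀ t, HasDerivAt z (-b * z t + x t * y t) t) :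
    (∀ t, HasDerivAt (fun s => z s - x s ^ 2 / b)
        (-b * (z t - x t ^ 2 / b)) t) ∧
    (∀ t, z t - x t ^ 2 / b = (z 0 - x 0 ^ 2 / b) * Real.exp (-b * t)) :=
  lorenz_invariant_ode_general a b ha hb x y z hx hz
end

section
/- For the Lorenz system with b = 2a, if (x,y,z) is a solution with initial condition z(0) = x(0)²/b, then z(t) = x(t)²/b for all t. -/
/-!
When `b = 2a`, the `x y` terms cancel in the derivative of `w = z - x² / b`, leaving the scalar
linear equation `w' = -b w`. Hence `w t = exp (-b t) w 0`, and `w` vanishes identically once it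
vanishes at `0`.
-/

open Real

theorem eq_exp_mul_smul_of_hasDerivAt_eq_smul {E : Type*} [NormedAddCommGroup E]
    [NormedSpace ℝ E] {w : ℝ → E} {k : ℝ} (hw : ∀ t, HasDerivAt w (k • w t) t) (t : ℝ) :
    w t = exp (k * t) • w 0 := by
  have hderiv : ∀ s, HasDerivAt (fun s => exp (-k * s) • w s) 0 s := fun s => by
    have hexp : HasDerivAt (fun s => exp (-k * s)) (exp (-k * s) * -k) s := by
      simpa using ((hasDerivAt_id s).const_mul (-k)).exp
    convert hexp.fun_smul (hw s) using 1
    rw [smul_smul, mul_neg, neg_smul, mul_comm, add_neg_cancel]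
  have hconst := is_const_of_deriv_eq_zero (fun s => (hderiv s).differentiableAt)
    (fun s => (hderiv s).deriv) t 0
  simp only [mul_zero, exp_zero, one_smul] at hconst
  rw [← hconst, smul_smul, ← exp_add, neg_mul, add_neg_cancel, exp_zero, one_smul]

theorem hasDerivAt_lorenz_sub_sq_div {a : ℝ} (ha : a ≠ 0) {x y z : ℝ → ℝ}
    (hx : ∀ t, HasDerivAt x (-a * x t + a * y t) t)
    (hz : ∀ t, HasDerivAt z (-(2 * a) * z t + x t * y t) t) (t : ℝ) :
    HasDerivAt (fun t => z t - x t ^ 2 / (2 * a)) (-(2 * a) * (z t - x t ^ 2 / (2 * a))) t := by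
  refine ((hz t).fun_sub (((hx t).fun_pow 2).div_const (2 * a))).congr_deriv ?_
  field_simp
  ring

theorem lorenz_invariant_manifold_general (a b : ℝ) (ha : 0 < a) (hb : b = 2 * a)
    (x y z : ℝ → ℝ)
    (hx : ∀ t, HasDerivAt x (-a * x t + a * y t) t)
    (hz : ∀ t, HasDerivAt z (-b * z t + x t * y t) t)
    (h0 : z 0 = x 0 ^ 2 / b) :
    ∀ t, z t = x t ^ 2 / b := by
  subst hb
  intro t
  have hdev := eq_exp_mul_smul_of_hasDerivAt_eq_smul (hasDerivAt_lorenz_sub_sq_div ha.ne' hx hz) t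
  rwa [h0, sub_self, smul_zero, sub_eq_zero] at hdev

theorem lorenz_invariant_manifold (a b r : ℝ) (ha : 0 < a) (hb : b = 2 * a)
    (x y z : ℝ → ℝ)
    (hx : ∀ t, HasDerivAt x (-a * x t + a * y t) t)
    (hy : ∀ t, HasDerivAt y (r * x t - y t - x t * z t) t)
    (hz : ∀ t, HasDerivAt z (-b * z t + x t * y t) t)
    (h0 : z 0 = x 0 ^ 2 / b) :
    ∀ t, z t = x t ^ 2 / b :=
  lorenz_invariant_manifold_general a b ha hb x y z hx hz h0
end

section
/- Suppose (x,y,z) solves the Lorenz system with b = 2a, a ≠ 0, and z = x²/b identically. Then x is twice differentiable and satisfies the second-order equation x'' + (a+1) x' + a(1-r) x = -x³/2. -/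
theorem lorenz_second_order_reduction_general (a r : ℝ) (ha : a ≠ 0)
    (x y z : ℝ → ℝ)
    (hx : ∀ t, HasDerivAt x (-a * x t + a * y t) t)
    (hy : ∀ t, HasDerivAt y (r * x t - y t - x t * z t) t)
    (hinv : ∀ t, z t = x t ^ 2 / (2 * a)) :
    ∀ t, HasDerivAt (fun s => -a * x s + a * y s)
      (-(a + 1) * (-a * x t + a * y t) - a * (1 - r) * x t - x t ^ 3 / 2) t := by
  intro t
  have hxy := ((hx t).const_mul (-a)).add ((hy t).const_mul a)
  refine hxy.congr_deriv ?_
  rw [hinv t]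
  field_simp
  ring

theorem lorenz_second_order_reduction (a b r : ℝ) (ha : a ≠ 0) (hb : b = 2 * a)
    (x y z : ℝ → ℝ)
    (hx : ∀ t, HasDerivAt x (-a * x t + a * y t) t)
    (hy : ∀ t, HasDerivAt y (r * x t - y t - x t * z t) t)
    (hz : ∀ t, HasDerivAt z (-b * z t + x t * y t) t)
    (hinv : ∀ t, z t = x t ^ 2 / (2 * a)) :
    ∀ t, HasDerivAt (fun s => -a * x s + a * y s)
      (-(a + 1) * (-a * x t + a * y t) - a * (1 - r) * x t - x t ^ 3 / 2) t :=
  lorenz_second_order_reduction_general a r ha x y z hx hy hinv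
end
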